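/- arXiv:1608.08322 — 3 statements merged into one kernel-verified Lean document; each statement's English description precedes it below -/
import Mathlib

section
/- If d ≥ 0, l_0 ≥ 0 and l_1, …, l_d ≥ 1 are integers, then s(A(l_0, l_1, …, l_d)) = K(l_1, …, l_d), where s is the Stern sequence, A the alternating binary expansion and K the continuant. -/
/-- The Stern sequence: `s 0 = 0`, `s 1 = 1`, `s (2n) = s n`, `s (2n+1) = s n + s (n+1)`. -/
def stern : ℕ → ℕ
  | 0 => 0
  | 1 => 1
  | n + 2 =>
    if n % 2 = 0 then stern (n / 2 + 1)
    else stern ((n + 1) / 2) + stern ((n + 1) / 2 + 1)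
decreasing_by all_goals omega

/-- The alternating binary expansion `A(l0, ..., ld)`, where the list is `[l0, l1, ..., ld]`. -/
def altBin (l : List ℕ) : ℤ :=
  ∑ i ∈ Finset.range l.length, (-1 : ℤ) ^ (l.length - 1 - i) * 2 ^ ((l.take (i + 1)).sum)

/-- The continuant `K`: `K() = 1`, `K(x1) = x1`, and
`K(x1,...,xd) = xd * K(x1,...,x(d-1)) + K(x1,...,x(d-2))` for `d >= 2`
(equivalently, by the symmetry of continuants,
`K(x1,...,xd) = x1 * K(x2,...,xd) + K(x3,...,xd)`). -/
def contN : List ℕ → ℕ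
  | [] => 1
  | [x] => x
  | x :: y :: t => x * contN (y :: t) + contN t

lemma stern_two_mul (n : ℕ) : stern (2 * n) = stern n := by
  match n with
  | 0 => rfl
  | k + 1 =>
    rw [show 2 * (k + 1) = 2 * k + 2 by ring, stern]
    have h : 2 * k % 2 = 0 := by omega
    have h2 : 2 * k / 2 = k := by omega
    simp [h, h2]

lemma stern_two_mul_add_one (n : ℕ) : stern (2 * n + 1) = stern n + stern (n + 1) := by
  match n with
  | 0 => simp [stern]
  | k + 1 =>
    rw [show 2 * (k + 1) + 1 = (2 * k + 1) + 2 by ring, stern]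
    have h : (2 * k + 1) % 2 ≠ 0 := by omega
    have h2 : (2 * k + 1 + 1) / 2 = k + 1 := by omega
    simp [h, h2]

lemma stern_pow_mul (k n : ℕ) : stern (2 ^ k * n) = stern n := by
  induction k with
  | zero => simp
  | succ k ih =>
    rw [show 2 ^ (k + 1) * n = 2 * (2 ^ k * n) by ring, stern_two_mul, ih]

lemma stern_pow_mul_sub_one (k b : ℕ) (hb : 1 ≤ b) :
    stern (2 ^ k * b - 1) = k * stern b + stern (b - 1) := by
  induction k with
  | zero => simp
  | succ k ih =>
    have hpos : 1 ≤ 2 ^ k * b := Nat.one_le_iff_ne_zero.mpr (by positivity)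
    rw [show 2 ^ (k + 1) * b - 1 = 2 * (2 ^ k * b - 1) + 1 by
      have : 2 ^ (k + 1) * b = 2 * (2 ^ k * b) := by ring
      omega]
    rw [stern_two_mul_add_one, ih, show 2 ^ k * b - 1 + 1 = 2 ^ k * b by omega,
      stern_pow_mul]
    ring

lemma stern_pow_mul_add_one (k b : ℕ) :
    stern (2 ^ k * b + 1) = k * stern b + stern (b + 1) := by
  induction k with
  | zero => simp
  | succ k ih =>
    rw [show 2 ^ (k + 1) * b + 1 = 2 * (2 ^ k * b) + 1 by ring,
      stern_two_mul_add_one, stern_pow_mul, ih]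
    ring

/-- Natural-number version of `altBin (0 :: ls)`. -/
def natB : List ℕ → ℕ
  | [] => 1
  | x :: t => if t.length % 2 = 0 then 2 ^ x * natB t - 1 else 2 ^ x * natB t + 1

lemma natB_pos (ls : List ℕ) (hls : ∀ x ∈ ls, 1 ≤ x) : 1 ≤ natB ls := by
  induction ls with
  | nil => simp [natB]
  | cons x t ih =>
    have hx : 1 ≤ x := hls x (by simp)
    have ht : 1 ≤ natB t := ih fun y hy => hls y (by simp [hy])
    have h2 : 2 ≤ 2 ^ x := by
      calc 2 = 2 ^ 1 := rfl
      _ ≤ 2 ^ x := Nat.pow_le_pow_right (by norm_num) hx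
    have : 2 ≤ 2 ^ x * natB t := le_trans h2 (Nat.le_mul_of_pos_right _ ht)
    unfold natB
    split <;> omega

lemma natB_cons (x : ℕ) (t : List ℕ) :
    natB (x :: t) = if t.length % 2 = 0 then 2 ^ x * natB t - 1 else 2 ^ x * natB t + 1 := rfl

lemma altBin_single (a : ℕ) : altBin [a] = 2 ^ a := by
  simp [altBin]

lemma altBin_cons_cons (a x : ℕ) (t : List ℕ) :
    altBin (a :: x :: t) = 2 ^ x * altBin (a :: t) + (-1) ^ (t.length + 1) * 2 ^ a := by
  unfold altBin
  rw [show (a :: x :: t).length = t.length + 2 by simp]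
  rw [show (a :: t).length = t.length + 1 by simp]
  rw [Finset.sum_range_succ']
  simp only [List.take, List.sum_cons]
  rw [Finset.mul_sum]
  congr 1
  · apply Finset.sum_congr rfl
    intro i hi
    rw [show t.length + 2 - 1 - (i + 1) = t.length - i by omega,
      show t.length + 1 - 1 - i = t.length - i by omega]
    ring

lemma altBin_eq_natB (a : ℕ) (ls : List ℕ) (hls : ∀ x ∈ ls, 1 ≤ x) :
    altBin (a :: ls) = 2 ^ a * (natB ls : ℤ) := by
  induction ls with
  | nil => simp [altBin_single, natB]
  | cons x t ih =>
    have ht : ∀ y ∈ t, 1 ≤ y := fun y hy => hls y (by simp [hy])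
    have hpos : 1 ≤ natB t := natB_pos t ht
    rw [altBin_cons_cons, ih ht, natB_cons]
    have hge : 1 ≤ 2 ^ x * natB t :=
      Nat.one_le_iff_ne_zero.mpr (by positivity)
    rcases Nat.even_or_odd t.length with he | ho
    · have h0 : t.length % 2 = 0 := Nat.even_iff.mp he
      have hsign : (-1 : ℤ) ^ (t.length + 1) = -1 := by
        rw [Odd.neg_one_pow]; exact Even.add_one he
      rw [hsign, if_pos h0, Nat.cast_sub hge]
      push_cast
      ring
    · have h1 : t.length % 2 = 1 := Nat.odd_iff.mp ho
      have hsign : (-1 : ℤ) ^ (t.length + 1) = 1 := by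
        rw [Even.neg_one_pow]; exact Odd.add_one ho
      rw [hsign, if_neg (by omega)]
      push_cast
      ring

/-- The "companion" value: `contN` of the tail, or `0` for the empty list. -/
def compC : List ℕ → ℕ
  | [] => 0
  | _ :: t => contN t

lemma contN_cons (x : ℕ) (t : List ℕ) : contN (x :: t) = x * contN t + compC t := by
  cases t with
  | nil => simp [contN, compC]
  | cons y t' => rfl

lemma key (ls : List ℕ) (hls : ∀ x ∈ ls, 1 ≤ x) :
    stern (natB ls) = contN ls ∧
      stern (if ls.length % 2 = 0 then natB ls - 1 else natB ls + 1) = compC ls := by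
  induction ls with
  | nil => simp [natB, contN, compC, stern]
  | cons x t ih =>
    have hx : 1 ≤ x := hls x (by simp)
    have ht : ∀ y ∈ t, 1 ≤ y := fun y hy => hls y (by simp [hy])
    obtain ⟨ih1, ih2⟩ := ih ht
    have hb : 1 ≤ natB t := natB_pos t ht
    have h2x : 2 ≤ 2 ^ x := by
      calc 2 = 2 ^ 1 := rfl
      _ ≤ 2 ^ x := Nat.pow_le_pow_right (by norm_num) hx
    have hge2 : 2 ≤ 2 ^ x * natB t := le_trans h2x (Nat.le_mul_of_pos_right _ hb)
    rcases Nat.even_or_odd t.length with he | ho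
    · have h0 : t.length % 2 = 0 := Nat.even_iff.mp he
      rw [if_pos h0] at ih2
      have hn : natB (x :: t) = 2 ^ x * natB t - 1 := by rw [natB_cons, if_pos h0]
      have hlen : (x :: t).length % 2 ≠ 0 := by simp [List.length_cons]; omega
      constructor
      · rw [hn, stern_pow_mul_sub_one x (natB t) hb, ih1, ih2, contN_cons]
      · rw [if_neg hlen, hn, show 2 ^ x * natB t - 1 + 1 = 2 ^ x * natB t by omega,
          stern_pow_mul, ih1]
        rfl
    · have h1 : t.length % 2 = 1 := Nat.odd_iff.mp ho
      rw [if_neg (by omega)] at ih2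
      have hn : natB (x :: t) = 2 ^ x * natB t + 1 := by rw [natB_cons, if_neg (by omega)]
      have hlen : (x :: t).length % 2 = 0 := by simp [List.length_cons]; omega
      constructor
      · rw [hn, stern_pow_mul_add_one x (natB t), ih1, ih2, contN_cons]
      · rw [if_pos hlen, hn, show 2 ^ x * natB t + 1 - 1 = 2 ^ x * natB t by omega,
          stern_pow_mul, ih1]
        rfl

/-- If `d >= 0`, `l0 >= 0` and `l1, ..., ld >= 1` are integers, then
`s (A (l0, l1, ..., ld)) = K (l1, ..., ld)`, with `s` the Stern sequence, `A` the alternating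
binary expansion and `K` the continuant. -/
theorem stern_altBin_eq_continuant (l0 : ℕ) (ls : List ℕ) (hls : ∀ x ∈ ls, 1 ≤ x) :
    stern (altBin (l0 :: ls)).toNat = contN ls := by
  rw [altBin_eq_natB l0 ls hls,
    show (2 : ℤ) ^ l0 * (natB ls : ℤ) = ((2 ^ l0 * natB ls : ℕ) : ℤ) by push_cast; ring,
    Int.toNat_natCast, stern_pow_mul]
  exact (key ls hls).1
end

section
/- For integers p_0, p_1 ≥ 0, K(1,…,1 (p_0 times), 3, 1,…,1 (p_1 times)) = F_{p_0+p_1+3} + F_{p_0+p_1+1} - 2 F_{p_0+p_1-2} - 2 F_{p_0-2} F_{p_1-2}. -/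
lemma contN_rep (p : ℕ) : contN (List.replicate p 1) = Nat.fib (p + 1) := by
  induction p using Nat.twoStepInduction with
  | zero => simp [contN]
  | one => simp [contN]
  | more p ih1 ih2 =>
    have h : List.replicate (p + 2) 1 = 1 :: 1 :: List.replicate p 1 := by
      simp [List.replicate_succ]
    rw [h, contN]
    have e : (1 : ℕ) :: List.replicate p 1 = List.replicate (p + 1) 1 := by
      simp [List.replicate_succ]
    rw [e, ih1, ih2]
    have f : Nat.fib (p + 2 + 1) = Nat.fib (p + 1) + Nat.fib (p + 1 + 1) := Nat.fib_add_two
    rw [f]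
    ring

lemma contN_cons3 (p : ℕ) : contN (3 :: List.replicate p 1) = 3 * Nat.fib (p + 1) + Nat.fib p := by
  cases p with
  | zero => simp [contN]
  | succ p =>
    have h : List.replicate (p + 1) 1 = 1 :: List.replicate p 1 := by
      simp [List.replicate_succ]
    rw [h, contN]
    have e : (1 : ℕ) :: List.replicate p 1 = List.replicate (p + 1) 1 := by
      simp [List.replicate_succ]
    rw [e, contN_rep, contN_rep]

/-- For `p0, p1 >= 0`, with `F` the Fibonacci sequence extended to all
integers: `K(1^(p0), 3, 1^(p1)) = F(p0+p1+3) + F(p0+p1+1) - 2 F(p0+p1-2) - 2 F(p0-2) F(p1-2)`. -/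
theorem continuant_ones_three (F : ℤ → ℤ) (h0 : F 0 = 0) (h1 : F 1 = 1)
    (hrec : ∀ n : ℤ, F n = F (n - 1) + F (n - 2)) (p0 p1 : ℕ) :
    (contN (List.replicate p0 1 ++ 3 :: List.replicate p1 1) : ℤ) =
      F ((p0 : ℤ) + p1 + 3) + F ((p0 : ℤ) + p1 + 1) - 2 * F ((p0 : ℤ) + p1 - 2)
        - 2 * F ((p0 : ℤ) - 2) * F ((p1 : ℤ) - 2) := by
  have hF2 : ∀ n : ℤ, F (n + 2) = F (n + 1) + F n := by
    intro n
    have h := hrec (n + 2)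
    have e1 : n + 2 - 1 = n + 1 := by ring
    have e2 : n + 2 - 2 = n := by ring
    rwa [e1, e2] at h
  have hm1 : F (-1) = 1 := by
    have h := hrec 1
    norm_num at h
    linarith
  have hm2 : F (-2) = -1 := by
    have h := hrec 0
    norm_num at h
    rw [hm1] at h
    linarith
  have hFk : ∀ k : ℕ, F k = Nat.fib k := by
    have aux : ∀ k : ℕ, F k = Nat.fib k ∧ F (k + 1) = Nat.fib (k + 1) := by
      intro k
      induction k with
      | zero => simpa using ⟨h0, h1⟩
      | succ k ih =>
        refine ⟨ih.2, ?_⟩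
        have h := hF2 (k : ℤ)
        rw [ih.1, ih.2] at h
        push_cast [Nat.fib_add_two]
        rw [show (k : ℤ) + 1 + 1 = (k : ℤ) + 2 by ring]
        linarith
    exact fun k => (aux k).1
  induction p0 using Nat.twoStepInduction with
  | zero =>
    simp only [List.replicate_zero, List.nil_append, Nat.cast_zero]
    rw [contN_cons3]
    rw [show (0 : ℤ) - 2 = -2 by ring, hm2]
    rw [show (0 : ℤ) + (p1 : ℤ) + 3 = ((p1 + 3 : ℕ) : ℤ) by push_cast; ring, hFk]
    rw [show (0 : ℤ) + (p1 : ℤ) + 1 = ((p1 + 1 : ℕ) : ℤ) by push_cast; ring, hFk]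
    have f3 : Nat.fib (p1 + 3) = Nat.fib (p1 + 1) + (Nat.fib p1 + Nat.fib (p1 + 1)) := by
      rw [show p1 + 3 = (p1 + 1) + 2 by omega, Nat.fib_add_two,
        show p1 + 1 + 1 = p1 + 2 by omega, Nat.fib_add_two]
    rw [show (0 : ℤ) + (p1 : ℤ) - 2 = (p1 : ℤ) - 2 by ring]
    push_cast at f3 ⊢
    linarith [f3]
  | one =>
    have hl : List.replicate 1 1 ++ 3 :: List.replicate p1 1
        = 1 :: 3 :: List.replicate p1 1 := by simp
    rw [hl, contN, contN_cons3, contN_rep]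
    push_cast
    rw [hm1]
    rw [show (1 : ℤ) + (p1 : ℤ) + 3 = ((p1 + 4 : ℕ) : ℤ) by push_cast; ring, hFk]
    rw [show (1 : ℤ) + (p1 : ℤ) + 1 = ((p1 + 2 : ℕ) : ℤ) by push_cast; ring, hFk]
    rw [show (1 : ℤ) + (p1 : ℤ) - 2 = (p1 : ℤ) - 1 by ring]
    have hp : F ((p1 : ℤ) - 1) + F ((p1 : ℤ) - 2) = F p1 := (hrec p1).symm
    have hfp : F (p1 : ℤ) = Nat.fib p1 := hFk p1
    have f4 : Nat.fib (p1 + 4) = Nat.fib p1 + Nat.fib (p1 + 1) +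
        (Nat.fib (p1 + 1) + (Nat.fib p1 + Nat.fib (p1 + 1))) := by
      rw [show p1 + 4 = (p1 + 2) + 2 by omega, Nat.fib_add_two,
        show p1 + 2 + 1 = (p1 + 1) + 2 by omega, Nat.fib_add_two, Nat.fib_add_two,
        show p1 + 1 + 1 = p1 + 2 by omega, Nat.fib_add_two]
    have f2 : Nat.fib (p1 + 2) = Nat.fib p1 + Nat.fib (p1 + 1) := Nat.fib_add_two
    push_cast at f4 f2 ⊢
    linarith [f4, f2, hp, hfp]
  | more p0 ih1 ih2 =>
    have hl : List.replicate (p0 + 2) 1 ++ 3 :: List.replicate p1 1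
        = 1 :: (List.replicate (p0 + 1) 1 ++ 3 :: List.replicate p1 1) := by
      simp [List.replicate_succ]
    have hl2 : List.replicate (p0 + 1) 1 ++ 3 :: List.replicate p1 1
        = 1 :: (List.replicate p0 1 ++ 3 :: List.replicate p1 1) := by
      simp [List.replicate_succ]
    have hstep : contN (List.replicate (p0 + 2) 1 ++ 3 :: List.replicate p1 1)
        = contN (List.replicate (p0 + 1) 1 ++ 3 :: List.replicate p1 1)
          + contN (List.replicate p0 1 ++ 3 :: List.replicate p1 1) := by
      rw [hl, hl2]
      cases p0 with
      | zero => simp [contN]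
      | succ p =>
        rw [show List.replicate (p + 1) 1 ++ 3 :: List.replicate p1 1
          = 1 :: (List.replicate p 1 ++ 3 :: List.replicate p1 1) by simp [List.replicate_succ]]
        rw [contN]
        ring
    have r1 : F ((p0 : ℤ) + 2 + p1 + 3) = F ((p0 : ℤ) + 1 + p1 + 3) + F ((p0 : ℤ) + p1 + 3) := by
      have h := hF2 ((p0 : ℤ) + p1 + 3)
      rwa [show (p0 : ℤ) + p1 + 3 + 2 = (p0 : ℤ) + 2 + p1 + 3 by ring,
        show (p0 : ℤ) + p1 + 3 + 1 = (p0 : ℤ) + 1 + p1 + 3 by ring] at h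
    have r2 : F ((p0 : ℤ) + 2 + p1 + 1) = F ((p0 : ℤ) + 1 + p1 + 1) + F ((p0 : ℤ) + p1 + 1) := by
      have h := hF2 ((p0 : ℤ) + p1 + 1)
      rwa [show (p0 : ℤ) + p1 + 1 + 2 = (p0 : ℤ) + 2 + p1 + 1 by ring,
        show (p0 : ℤ) + p1 + 1 + 1 = (p0 : ℤ) + 1 + p1 + 1 by ring] at h
    have r3 : F ((p0 : ℤ) + 2 + p1 - 2) = F ((p0 : ℤ) + 1 + p1 - 2) + F ((p0 : ℤ) + p1 - 2) := by
      have h := hF2 ((p0 : ℤ) + p1 - 2)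
      rwa [show (p0 : ℤ) + p1 - 2 + 2 = (p0 : ℤ) + 2 + p1 - 2 by ring,
        show (p0 : ℤ) + p1 - 2 + 1 = (p0 : ℤ) + 1 + p1 - 2 by ring] at h
    have r4 : F ((p0 : ℤ) + 2 - 2) = F ((p0 : ℤ) + 1 - 2) + F ((p0 : ℤ) - 2) := by
      have h := hF2 ((p0 : ℤ) - 2)
      rwa [show (p0 : ℤ) - 2 + 2 = (p0 : ℤ) + 2 - 2 by ring,
        show (p0 : ℤ) - 2 + 1 = (p0 : ℤ) + 1 - 2 by ring] at h
    rw [hstep]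
    push_cast
    push_cast at ih2
    rw [ih1, ih2, r1, r2, r3, r4]
    ring
end

section
/- For every r ≥ 0, the set of the ⌈r/2⌉ largest distinct values in the r-th row of Stern's diatomic array equals {F_{r+2} - F_i F_j : i, j ≥ 0, i + j = r - 1}. -/
/-- The (distinct) values of the `r`-th row `s(2^r), s(2^r + 1), ..., s(2^(r+1))` of
Stern's diatomic array. -/
def sternRow (r : ℕ) : Finset ℕ :=
  (Finset.Icc (2 ^ r) (2 ^ (r + 1))).image stern

lemma stern_one : stern 1 = 1 := by simp [stern]
lemma stern_zero : stern 0 = 0 := by simp [stern]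

open Nat

/-- coefficient `F'_{k-1}`: `1` if `k = 0`, else `fib (k-1)` -/
def cc : ℕ → ℕ
  | 0 => 1
  | k + 1 => Nat.fib k

lemma fib_eq_cc (k : ℕ) : Nat.fib (k + 1) = Nat.fib k + cc k := by
  cases k with
  | zero => simp [cc]
  | succ k => rw [cc, Nat.fib_add_two]; ring

def Phi (m P Q : ℕ) : Prop :=
  (P = fib (m + 1) ∧ Q = fib m) ∨
  (∃ k j, 1 ≤ j ∧ k + j + 2 = m ∧ P + fib k * fib j = fib (m + 1) ∧
    Q + cc k * fib j = fib m) ∨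
  (∃ k j, 1 ≤ j ∧ k + j + 3 = m ∧ P + fib (k + 1) * fib j = fib (m + 1) ∧
    Q + cc k * fib j = fib (k + j + 2)) ∨
  (∃ u, m = u + 5 ∧ P + fib (u + 2) ≤ fib (u + 6) ∧ P + Q + fib (u + 3) ≤ fib (u + 7) ∧
    Q ≤ fib (u + 5))

lemma fib_mul_aux {k j : ℕ} (hj : 1 ≤ j) : fib (k + j) = fib k * fib (j - 1) + fib (k + 1) * fib j := by
  obtain ⟨j', rfl⟩ : ∃ j', j = j' + 1 := ⟨j - 1, by omega⟩
  rw [show k + (j' + 1) = k + j' + 1 by ring, Nat.fib_add]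
  simp

lemma phi_step {m P Q : ℕ} (hm : 1 ≤ m) (h : Phi m P Q) :
    Phi (m + 1) (P + Q) P ∧ Phi (m + 1) (P + Q) Q := by
  rcases h with ⟨hP, hQ⟩ | ⟨k, j, hj, hm', hP, hQ⟩ | ⟨k, j, hj, hm', hP, hQ⟩ | ⟨u, hm', h1, h2, h3⟩
  · constructor
    · left
      constructor
      · rw [hP, hQ, show m + 1 + 1 = m + 2 by ring, Nat.fib_add_two]; ring
      · rw [hP]
    · -- R-child of A
      rcases Nat.lt_or_ge m 2 with h2 | h2
      · interval_cases m
        · left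
          subst hP hQ
          constructor <;> simp [Nat.fib_add_two]
      · right; left
        refine ⟨0, m - 1, by omega, by omega, ?_, ?_⟩
        · simp [hP, hQ, show m + 1 + 1 = m + 2 by ring, Nat.fib_add_two]; ring
        · rw [hQ, cc]
          have : m = (m - 1) + 1 := by omega
          rw [this, Nat.fib_add_two]
          simp; omega
  · -- class B
    have hd : fib (k + 1) * fib j = fib k * fib j + cc k * fib j := by
      rw [fib_eq_cc k, Nat.add_mul]
    have h2 : fib (m + 1 + 1) = fib (m + 1) + fib m := by
      rw [show m + 1 + 1 = m + 2 by ring, Nat.fib_add_two]; ring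
    have key : P + Q + fib (k + 1) * fib j = fib (m + 1 + 1) := by omega
    constructor
    · -- L-child : B (k+1, j)
      right; left
      refine ⟨k + 1, j, hj, by omega, key, ?_⟩
      rw [show cc (k + 1) = fib k from rfl]
      exact hP
    · -- R-child : C (k, j)
      right; right; left
      refine ⟨k, j, hj, by omega, key, ?_⟩
      rw [show k + j + 2 = m by omega]
      exact hQ
  · -- class C
    have e1 : fib (m + 1) = fib (k + j + 4) := by congr 1; omega
    have hd : fib (k + 1) * fib j = fib k * fib j + cc k * fib j := by
      rw [fib_eq_cc k, Nat.add_mul]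
    have hfa : fib (k + j) = fib k * fib (j - 1) + fib (k + 1) * fib j := fib_mul_aux hj
    have hmul : fib k * fib (j - 1) ≤ fib (k + 1) * fib j :=
      Nat.mul_le_mul (Nat.fib_mono (by omega)) (Nat.fib_mono (by omega))
    have f5 : fib (k + j + 5) = fib (k + j + 4) + fib (k + j + 3) := by
      rw [show k + j + 5 = (k + j + 3) + 2 by ring, Nat.fib_add_two]; ring
    have f4 : fib (k + j + 4) = fib (k + j + 3) + fib (k + j + 2) := by
      rw [show k + j + 4 = (k + j + 2) + 2 by ring, Nat.fib_add_two]; ring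
    have f3 : fib (k + j + 3) = fib (k + j + 2) + fib (k + j + 1) := by
      rw [show k + j + 3 = (k + j + 1) + 2 by ring, Nat.fib_add_two]; ring
    have f2 : fib (k + j + 2) = fib (k + j + 1) + fib (k + j) := by
      rw [show k + j + 2 = (k + j) + 2 by ring, Nat.fib_add_two]; ring
    have f6 : fib (k + j + 6) = fib (k + j + 5) + fib (k + j + 4) := by
      rw [show k + j + 6 = (k + j + 4) + 2 by ring, Nat.fib_add_two]; ring
    rw [e1] at hP
    constructor
    · -- L-child : D with u = k + j - 1
      right; right; right
      refine ⟨k + j - 1, by omega, ?_, ?_, ?_⟩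
      · rw [show k + j - 1 + 2 = k + j + 1 by omega, show k + j - 1 + 6 = k + j + 5 by omega]
        omega
      · rw [show k + j - 1 + 3 = k + j + 2 by omega, show k + j - 1 + 7 = k + j + 6 by omega]
        omega
      · rw [show k + j - 1 + 5 = k + j + 4 by omega]
        omega
    · -- R-child : D
      right; right; right
      refine ⟨k + j - 1, by omega, ?_, ?_, ?_⟩
      · rw [show k + j - 1 + 2 = k + j + 1 by omega, show k + j - 1 + 6 = k + j + 5 by omega]
        omega
      · rw [show k + j - 1 + 3 = k + j + 2 by omega, show k + j - 1 + 7 = k + j + 6 by omega]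
        omega
      · rw [show k + j - 1 + 5 = k + j + 4 by omega]
        omega
  · -- class D
    subst hm'
    have f1 : fib (u + 4) = fib (u + 2) + fib (u + 3) := Nat.fib_add_two
    have f2 : fib (u + 8) = fib (u + 6) + fib (u + 7) := Nat.fib_add_two
    have f3 : fib (u + 7) = fib (u + 5) + fib (u + 6) := Nat.fib_add_two
    have f4 : fib (u + 6) = fib (u + 4) + fib (u + 5) := Nat.fib_add_two
    have f5 : fib (u + 5) = fib (u + 3) + fib (u + 4) := Nat.fib_add_two
    have f0 : fib (u + 3) = fib (u + 1) + fib (u + 2) := Nat.fib_add_two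
    constructor
    · right; right; right
      refine ⟨u + 1, by ring, ?_, ?_, ?_⟩
      · rw [show u + 1 + 2 = u + 3 by ring, show u + 1 + 6 = u + 7 by ring]; omega
      · rw [show u + 1 + 3 = u + 4 by ring, show u + 1 + 7 = u + 8 by ring]; omega
      · rw [show u + 1 + 5 = u + 6 by ring]; omega
    · right; right; right
      refine ⟨u + 1, by ring, ?_, ?_, ?_⟩
      · rw [show u + 1 + 2 = u + 3 by ring, show u + 1 + 6 = u + 7 by ring]; omega
      · rw [show u + 1 + 3 = u + 4 by ring, show u + 1 + 7 = u + 8 by ring]; omega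
      · rw [show u + 1 + 5 = u + 6 by ring]; omega


def contP : List ℕ → ℕ × ℕ
  | [] => (1, 0)
  | a :: t => ((contP t).1 * a + (contP t).2, (contP t).1)

def cont (l : List ℕ) : ℕ := (contP l).1

lemma cont_nil : cont [] = 1 := rfl
lemma cont_one : cont [1] = 1 := rfl
lemma cont_cons (a : ℕ) (t : List ℕ) : cont (a :: t) = cont t * a + (contP t).2 := rfl
lemma contP_snd (a : ℕ) (t : List ℕ) : (contP (a :: t)).2 = cont t := rfl

/-- R-identity -/
lemma cont_succ_cons (x : ℕ) (t : List ℕ) : cont ((x + 1) :: t) = cont (x :: t) + cont t := by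
  simp [cont_cons]; ring

/-- L-identity -/
lemma cont_one_cons (a : ℕ) (t : List ℕ) : cont (1 :: a :: t) = cont (a :: t) + cont t := by
  simp [cont_cons, contP_snd]

lemma phi_main : ∀ N c, c.sum = N → c ≠ [] → (∀ x ∈ c, 1 ≤ x) →
    Phi N (cont c) (cont c.tail) := by
  intro N
  induction N using Nat.strong_induction_on with
  | _ N ih =>
    rintro (_ | ⟨x, t⟩) hsum hne hparts
    · exact absurd rfl hne
    · match x, t with
      | 0, t => exact absurd (hparts 0 (by simp)) (by norm_num)
      | 1, [] =>
        simp only [List.sum_cons, List.sum_nil] at hsum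
        subst hsum
        left
        constructor <;> rfl
      | 1, a :: t =>
        have hs : (a :: t).sum < N := by simp at hsum ⊢; omega
        have h1 : 1 ≤ (a :: t).sum := by
          have := hparts a (by simp); simp; omega
        have := phi_step h1 (ih (a :: t).sum hs (a :: t) rfl (by simp) (fun y hy => hparts y (by simp [hy])))
        rw [cont_one_cons, List.tail_cons]
        have hN : N = (a :: t).sum + 1 := by simp at hsum ⊢; omega
        rw [hN]
        simpa using this.1
      | x + 2, t =>
        have hs : ((x + 1) :: t).sum < N := by simp at hsum ⊢; omega
        have h1 : 1 ≤ ((x + 1) :: t).sum := by simp; omega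
        have := phi_step h1 (ih _ hs ((x + 1) :: t) rfl (by simp) ?_)
        · rw [show x + 2 = x + 1 + 1 by ring, cont_succ_cons, List.tail_cons]
          have hN : N = ((x + 1) :: t).sum + 1 := by simp at hsum ⊢; omega
          rw [hN]
          exact this.2
        · intro y hy
          simp at hy
          rcases hy with rfl | hy
          · omega
          · exact hparts y (by simp [hy])

lemma phi_top {N P Q : ℕ} (h : Phi N P Q) (h2 : 2 ≤ N)
    (hbig : fib (N + 1) ≤ P + fib (N - 3)) :
    ∃ i j, i + j + 2 = N ∧ P + fib i * fib j = fib (N + 1) := by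
  rcases h with ⟨hP, _⟩ | ⟨k, j, hj, hm, hP, _⟩ | ⟨k, j, hj, hm, hP, _⟩ | ⟨u, hm, h1, _, _⟩
  · exact ⟨0, N - 2, by omega, by simp [hP]⟩
  · exact ⟨k, j, by omega, hP⟩
  · exact ⟨k + 1, j, by omega, by rw [show N + 1 = k + j + 4 by omega] at hP ⊢; exact hP⟩
  · refine ⟨1, u + 2, by omega, ?_⟩
    rw [show N - 3 = u + 2 by omega, show N + 1 = u + 6 by omega] at hbig
    rw [show N + 1 = u + 6 by omega, Nat.fib_one, one_mul]
    omega

lemma cont_le_fib : ∀ N c, c.sum = N → (∀ x ∈ c, 1 ≤ x) → cont c ≤ fib (N + 1) := by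
  intro N
  induction N using Nat.strong_induction_on with
  | _ N ih =>
    rintro (_ | ⟨x, t⟩) hsum hparts
    · simp [cont_nil]
      subst hsum
      simp [Nat.fib_add_two]
    · have hx := hparts x (by simp)
      have key : Phi N (cont (x :: t)) (cont (x :: t).tail) :=
        phi_main N _ hsum (by simp) hparts
      rcases key with ⟨hP, _⟩ | ⟨k, j, _, _, hP, _⟩ | ⟨k, j, _, hm, hP, _⟩ | ⟨u, hm, h1, _, _⟩
      · omega
      · omega
      · rw [show N + 1 = k + j + 4 by omega] at hP ⊢; omega
      · have : fib (u + 2) ≤ fib (u + 6) := Nat.fib_mono (by omega)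
        rw [show N + 1 = u + 6 by omega]
        omega

/-- pair condition relating `stern` at `n` with a composition `c` -/
def SternPair (n : ℕ) (c : List ℕ) : Prop :=
  (Odd n ∧ stern n = cont c ∧ stern (n + 1) = cont c.tail) ∨
  (Even n ∧ stern n = cont c.tail ∧ stern (n + 1) = cont c)

lemma stern_two : stern 2 = 1 := by
  rw [show (2 : ℕ) = 2 * 1 by norm_num, stern_two_mul, stern_one]

lemma sternPair_step_odd {n a : ℕ} {t : List ℕ} (hodd : Odd n) (h : SternPair n (a :: t)) :
    SternPair (2 * n) (1 :: a :: t) ∧ SternPair (2 * n + 1) ((a + 1) :: t) := by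
  rcases h with ⟨_, h1, h2⟩ | ⟨heven, _, _⟩
  swap
  · exact absurd (Nat.even_iff.mp heven) (by rw [Nat.odd_iff.mp hodd]; norm_num)
  simp only [List.tail_cons] at h1 h2
  constructor
  · right
    refine ⟨⟨n, by ring⟩, ?_, ?_⟩
    · simp only [List.tail_cons, stern_two_mul, h1]
    · rw [stern_two_mul_add_one, cont_one_cons, h1, h2]
  · left
    refine ⟨⟨n, by ring⟩, ?_, ?_⟩
    · rw [stern_two_mul_add_one, cont_succ_cons, h1, h2]
    · rw [show 2 * n + 1 + 1 = 2 * (n + 1) by ring, stern_two_mul, h2, List.tail_cons]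

lemma sternPair_step_even {n a : ℕ} {t : List ℕ} (heven : Even n) (h : SternPair n (a :: t)) :
    SternPair (2 * n) ((a + 1) :: t) ∧ SternPair (2 * n + 1) (1 :: a :: t) := by
  rcases h with ⟨hodd, _, _⟩ | ⟨_, h1, h2⟩
  · exact absurd (Nat.even_iff.mp heven) (by rw [Nat.odd_iff.mp hodd]; norm_num)
  simp only [List.tail_cons] at h1 h2
  constructor
  · right
    refine ⟨⟨n, by ring⟩, ?_, ?_⟩
    · simp only [List.tail_cons, stern_two_mul, h1]
    · rw [stern_two_mul_add_one, cont_succ_cons, h1, h2]; ring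
  · left
    refine ⟨⟨n, by ring⟩, ?_, ?_⟩
    · rw [stern_two_mul_add_one, cont_one_cons, h1, h2]; ring
    · rw [show 2 * n + 1 + 1 = 2 * (n + 1) by ring, stern_two_mul, h2, List.tail_cons]

lemma sternPair_base : SternPair 1 [1] := by
  left
  refine ⟨⟨0, by ring⟩, by rw [stern_one, cont_one], ?_⟩
  rw [List.tail_cons, cont_nil, stern_two]

/-- realization: every composition is realized by some `n` in the right range -/
lemma real_comp : ∀ N c, c.sum = N → c ≠ [] → (∀ x ∈ c, 1 ≤ x) →
    ∃ n, 2 ^ N ≤ 2 * n ∧ n < 2 ^ N ∧ SternPair n c := by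
  intro N
  induction N using Nat.strong_induction_on with
  | _ N ih =>
    rintro (_ | ⟨x, t⟩) hsum hne hparts
    · exact absurd rfl hne
    · match x, t with
      | 0, t => exact absurd (hparts 0 (by simp)) (by norm_num)
      | 1, [] =>
        have : N = 1 := by simpa using hsum.symm
        subst this
        exact ⟨1, by norm_num, by norm_num, sternPair_base⟩
      | 1, a :: t =>
        have hs : (a :: t).sum < N := by simp at hsum ⊢; omega
        obtain ⟨n, hn1, hn2, hp⟩ := ih _ hs (a :: t) rfl (by simp)
          (fun y hy => hparts y (by simp [hy]))
        have hN : N = (a :: t).sum + 1 := by simp at hsum ⊢; omega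
        rcases Nat.even_or_odd n with he | ho
        · exact ⟨2 * n + 1, by rw [hN, pow_succ]; omega, by rw [hN, pow_succ]; omega,
            (sternPair_step_even he hp).2⟩
        · exact ⟨2 * n, by rw [hN, pow_succ]; omega, by rw [hN, pow_succ]; omega,
            (sternPair_step_odd ho hp).1⟩
      | x + 2, t =>
        have hs : ((x + 1) :: t).sum < N := by simp at hsum ⊢; omega
        obtain ⟨n, hn1, hn2, hp⟩ := ih _ hs ((x + 1) :: t) rfl (by simp)
          (fun y hy => by
            simp at hy
            rcases hy with rfl | hy
            · omega
            · exact hparts y (by simp [hy]))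
        have hN : N = ((x + 1) :: t).sum + 1 := by simp at hsum ⊢; omega
        have hx2 : x + 2 = x + 1 + 1 := by ring
        rcases Nat.even_or_odd n with he | ho
        · exact ⟨2 * n, by rw [hN, pow_succ]; omega, by rw [hN, pow_succ]; omega,
            by rw [hx2]; exact (sternPair_step_even he hp).1⟩
        · exact ⟨2 * n + 1, by rw [hN, pow_succ]; omega, by rw [hN, pow_succ]; omega,
            by rw [hx2]; exact (sternPair_step_odd ho hp).2⟩

/-- decomposition: every `n ≥ 1` has a composition -/
lemma decomp : ∀ n, 1 ≤ n → ∃ c : List ℕ, c ≠ [] ∧ (∀ x ∈ c, 1 ≤ x) ∧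
    2 ^ c.sum ≤ 2 * n ∧ n < 2 ^ c.sum ∧ SternPair n c := by
  intro n
  induction n using Nat.strong_induction_on with
  | _ n ih =>
    intro hn
    match n, hn with
    | 1, _ => exact ⟨[1], by simp, by simp, by simp, by simp, sternPair_base⟩
    | n + 2, _ =>
      set m := (n + 2) / 2 with hm
      have hm1 : 1 ≤ m := by omega
      have hmlt : m < n + 2 := by omega
      obtain ⟨c, hcne, hparts, h1, h2, hp⟩ := ih m hmlt hm1
      obtain ⟨a, t, rfl⟩ : ∃ a t, c = a :: t := by
        cases c with
        | nil => exact absurd rfl hcne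
        | cons a t => exact ⟨a, t, rfl⟩
      have hps1 : ∀ y ∈ (1 :: a :: t), 1 ≤ y := by
        intro y hy
        simp at hy
        rcases hy with rfl | hy
        · omega
        · exact hparts y (by simp [hy])
      have hps2 : ∀ y ∈ ((a + 1) :: t), 1 ≤ y := by
        intro y hy
        simp at hy
        rcases hy with rfl | hy
        · omega
        · exact hparts y (by simp [hy])
      have hsum1 : (1 :: a :: t).sum = (a :: t).sum + 1 := by simp; ring
      have hsum2 : ((a + 1) :: t).sum = (a :: t).sum + 1 := by simp; ring
      rcases Nat.even_or_odd (n + 2) with he | ho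
      · have h2m : n + 2 = 2 * m := by rcases he with ⟨w, hw⟩; omega
        rcases Nat.even_or_odd m with hme | hmo
        · refine ⟨(a + 1) :: t, by simp, hps2, ?_, ?_, by rw [h2m]; exact (sternPair_step_even hme hp).1⟩
          · rw [hsum2, pow_succ]; omega
          · rw [hsum2, pow_succ]; omega
        · refine ⟨1 :: a :: t, by simp, hps1, ?_, ?_, by rw [h2m]; exact (sternPair_step_odd hmo hp).1⟩
          · rw [hsum1, pow_succ]; omega
          · rw [hsum1, pow_succ]; omega
      · have h2m : n + 2 = 2 * m + 1 := by rcases ho with ⟨w, hw⟩; omega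
        rcases Nat.even_or_odd m with hme | hmo
        · refine ⟨1 :: a :: t, by simp, hps1, ?_, ?_, by rw [h2m]; exact (sternPair_step_even hme hp).2⟩
          · rw [hsum1, pow_succ]; omega
          · rw [hsum1, pow_succ]; omega
        · refine ⟨(a + 1) :: t, by simp, hps2, ?_, ?_, by rw [h2m]; exact (sternPair_step_odd hmo hp).2⟩
          · rw [hsum2, pow_succ]; omega
          · rw [hsum2, pow_succ]; omega

lemma cont_ones : ∀ j, cont (List.replicate j 1) = fib (j + 1)
  | 0 => rfl
  | 1 => rfl
  | (j + 2) => by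
    rw [List.replicate_succ, List.replicate_succ, cont_one_cons, ← List.replicate_succ,
      cont_ones (j + 1), cont_ones j]
    have h1 : fib (j + 2 + 1) = fib (j + 1) + fib (j + 1 + 1) := by
      rw [show j + 2 + 1 = (j + 1) + 2 by ring, Nat.fib_add_two]
    omega

lemma cont_two_ones (j : ℕ) : cont (2 :: List.replicate j 1) = fib (j + 3) := by
  rw [show (2 : ℕ) = 1 + 1 by norm_num, cont_succ_cons, cont_ones j,
    show ((1 : ℕ) :: List.replicate j 1) = List.replicate (j + 1) 1 from
      List.replicate_succ.symm,
    cont_ones (j + 1)]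
  have h1 : fib (j + 3) = fib (j + 1) + fib (j + 1 + 1) := by
    rw [show j + 3 = (j + 1) + 2 by ring, Nat.fib_add_two]
  have h2 : fib (j + 1 + 1) = fib j + fib (j + 1) := Nat.fib_add_two
  omega

lemma cont_ones_prefix : ∀ a (l : List ℕ), l ≠ [] →
    cont (List.replicate a 1 ++ l) = fib (a + 1) * cont l + fib a * cont l.tail
  | 0, l, _ => by simp [Nat.fib_one]
  | 1, (b :: t), _ => by
    simp only [List.replicate_succ, List.replicate_zero, List.nil_append, List.cons_append,
      List.tail_cons]
    rw [cont_one_cons]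
    simp [Nat.fib_one, Nat.fib_two]
  | (a + 2), (b :: t), _ => by
    have h1 := cont_ones_prefix (a + 1) (b :: t) (by simp)
    have h0 := cont_ones_prefix a (b :: t) (by simp)
    have e2 : List.replicate (a + 2) 1 ++ b :: t = 1 :: 1 :: (List.replicate a 1 ++ b :: t) := by
      simp [List.replicate_succ]
    have e1 : (1 : ℕ) :: (List.replicate a 1 ++ b :: t) = List.replicate (a + 1) 1 ++ b :: t := by
      simp [List.replicate_succ]
    rcases List.exists_cons_of_ne_nil (by simp : List.replicate a 1 ++ b :: t ≠ []) with ⟨y, u, hyu⟩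
    rw [e2, show (1 : ℕ) :: 1 :: (List.replicate a 1 ++ b :: t)
        = 1 :: (1 :: (List.replicate a 1 ++ b :: t)) from rfl]
    rw [show (1 : ℕ) :: (List.replicate a 1 ++ b :: t) = 1 :: y :: u by rw [hyu], cont_one_cons,
      ← hyu, e1, h1, h0]
    rw [show a + 2 + 1 = (a + 1) + 2 by ring, Nat.fib_add_two (n := a + 1),
      Nat.fib_add_two (n := a)]
    ring
lemma cont_special (i j : ℕ) :
    cont (List.replicate i 1 ++ 2 :: List.replicate j 1) + fib i * fib j = fib (i + j + 3) := by
  rw [cont_ones_prefix i _ (by simp), List.tail_cons, cont_two_ones, cont_ones]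
  have := Nat.fib_add i (j + 2)
  rw [show i + (j + 2) + 1 = i + j + 3 by ring] at this
  rw [this, show j + 2 + 1 = j + 3 by ring, show fib (j + 2) = fib j + fib (j + 1) from Nat.fib_add_two]
  ring

/-- Vajda's identity -/
lemma vajda (i j : ℕ) : ∀ n, (fib (n + i) * fib (n + j) : ℤ) =
    fib n * fib (n + i + j) + (-1) ^ n * fib i * fib j
  | 0 => by simp
  | (n + 1) => by
    have key : (fib (n + i) * fib (n + j) : ℤ) + fib (n + 1 + i) * fib (n + 1 + j) =
        fib n * fib (n + i + j) + fib (n + 1) * fib (n + 1 + i + j) := by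
      have h1 := Nat.fib_add (n + i) (n + j)
      have h2 := Nat.fib_add n (n + i + j)
      rw [show n + i + (n + j) + 1 = n + (n + i + j) + 1 by ring] at h1
      rw [h2] at h1
      have := congrArg (fun x : ℕ => (x : ℤ)) h1
      push_cast at this
      rw [show n + i + 1 = n + 1 + i by ring, show n + j + 1 = n + 1 + j by ring,
        show n + i + j + 1 = n + 1 + i + j by ring] at this
      linarith
    have prev := vajda i j n
    have : (fib (n + 1 + i) * fib (n + 1 + j) : ℤ) =
        fib n * fib (n + i + j) + fib (n + 1) * fib (n + 1 + i + j)
        - fib n * fib (n + i + j) - (-1) ^ n * fib i * fib j := by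
      rw [← key, prev]; ring
    rw [this]
    rw [show n + i + j = n + (i + j) by ring, show n + 1 + i + j = n + 1 + (i + j) by ring]
    ring

lemma stern_pow : ∀ k, stern (2 ^ k) = 1
  | 0 => stern_one
  | (k + 1) => by rw [pow_succ, mul_comm, stern_two_mul, stern_pow k]

lemma prod_le_fib' {i j r : ℕ} (hij : i + j + 1 = r) : fib i * fib j ≤ fib (r - 2) := by
  match i, j with
  | 0, j => simp
  | i, 0 => simp
  | (i + 1), (j + 1) =>
    have h := Nat.fib_add i j
    have : fib (i + 1) * fib (j + 1) ≤ fib (i + j + 1) := by omega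
    calc fib (i + 1) * fib (j + 1) ≤ fib (i + j + 1) := this
    _ = fib (r - 2) := by congr 1; omega

lemma fib_lt_aux {r : ℕ} (hr : 1 ≤ r) : fib (r + 1) + fib (r - 2) < fib (r + 2) := by
  match r, hr with
  | 1, _ => norm_num
  | 2, _ => norm_num
  | (u + 3), _ =>
    have h1 : fib (u + 3 + 2) = fib (u + 3) + fib (u + 3 + 1) := Nat.fib_add_two
    have h2 : fib (u + 3) = fib (u + 1) + fib (u + 2) := Nat.fib_add_two
    have h3 : 1 ≤ fib (u + 2) := by
      have := Nat.fib_pos.mpr (show 0 < u + 2 by omega); omega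
    rw [show u + 3 - 2 = u + 1 by omega]
    omega

lemma fib_two_le {r : ℕ} (hr : 1 ≤ r) : fib (r - 2) + 2 ≤ fib (r + 2) := by
  match r, hr with
  | 1, _ => norm_num
  | 2, _ => norm_num
  | (u + 3), _ =>
    rw [show u + 3 - 2 = u + 1 by omega, show u + 3 + 2 = (u + 3) + 2 by ring]
    have h1 : fib (u + 3 + 2) = fib (u + 3) + fib (u + 3 + 1) := Nat.fib_add_two
    have h2 : fib (u + 1) ≤ fib (u + 3 + 1) := Nat.fib_mono (by omega)
    have h3 : 2 ≤ fib (u + 3) := by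
      have := Nat.fib_mono (show 3 ≤ u + 3 by omega)
      norm_num at this
      omega
    omega

lemma row_big {r v : ℕ} (hr : 1 ≤ r) (hv : v ∈ sternRow r)
    (hbig : fib (r + 2) ≤ v + fib (r - 2)) :
    ∃ i j : ℕ, i + j + 1 = r ∧ v + fib i * fib j = fib (r + 2) := by
  simp only [sternRow, Finset.mem_image, Finset.mem_Icc] at hv
  obtain ⟨n, ⟨hn1, hn2⟩, rfl⟩ := hv
  rcases eq_or_lt_of_le hn2 with heq | hlt
  · -- n = 2^(r+1) : stern n = 1, contradiction
    rw [heq, stern_pow] at hbig ⊢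
    have := fib_two_le hr
    omega
  · have hn0 : 1 ≤ n := le_trans (Nat.one_le_two_pow) hn1
    obtain ⟨c, hcne, hparts, hc1, hc2, hp⟩ := decomp n hn0
    have hsum : c.sum = r + 1 := by
      have hlo : r < c.sum := by
        by_contra h
        push_neg at h
        have : (2 : ℕ) ^ c.sum ≤ 2 ^ r := Nat.pow_le_pow_right (by norm_num) h
        omega
      have hhi : c.sum < r + 2 := by
        by_contra h
        push_neg at h
        have : (2 : ℕ) ^ (r + 2) ≤ 2 ^ c.sum := Nat.pow_le_pow_right (by norm_num) h
        have h2 : 2 * n < 2 * 2 ^ (r + 1) := by omega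
        rw [show 2 * 2 ^ (r + 1) = 2 ^ (r + 2) by rw [pow_succ]; ring] at h2
        omega
      omega
    rcases hp with ⟨_, h1, _⟩ | ⟨_, h1, _⟩
    · -- odd : stern n = cont c
      rw [h1] at hbig ⊢
      have hphi := phi_main (r + 1) c hsum hcne hparts
      obtain ⟨i, j, hij, hval⟩ := phi_top hphi (by omega)
        (by rw [show r + 1 + 1 = r + 2 by ring, show r + 1 - 3 = r - 2 by omega]; exact hbig)
      refine ⟨i, j, by omega, ?_⟩
      rw [show r + 1 + 1 = r + 2 by ring] at hval
      exact hval
    · -- even : stern n = cont c.tail, small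
      exfalso
      obtain ⟨a, t, rfl⟩ : ∃ a t, c = a :: t := by
        cases c with
        | nil => exact absurd rfl hcne
        | cons a t => exact ⟨a, t, rfl⟩
      rw [List.tail_cons] at h1
      have ha : 1 ≤ a := hparts a (by simp)
      have htsum : t.sum ≤ r := by simp at hsum; omega
      have hle : cont t ≤ fib (t.sum + 1) :=
        cont_le_fib t.sum t rfl (fun y hy => hparts y (by simp [hy]))
      have hle2 : fib (t.sum + 1) ≤ fib (r + 1) := Nat.fib_mono (by omega)
      have := fib_lt_aux hr
      rw [h1] at hbig
      omega

lemma row_has {r i j : ℕ} (hij : i + j + 1 = r) :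
    ∃ v ∈ sternRow r, v + fib i * fib j = fib (r + 2) := by
  set c := List.replicate i 1 ++ 2 :: List.replicate j 1 with hc
  have hsum : c.sum = r + 1 := by
    simp [hc, List.sum_replicate]
    omega
  have hparts : ∀ x ∈ c, 1 ≤ x := by
    intro x hx
    simp [hc] at hx
    rcases hx with hx | rfl | hx <;> omega
  obtain ⟨n, hn1, hn2, hp⟩ := real_comp (r + 1) c hsum (by simp [hc]) hparts
  have hval : cont c + fib i * fib j = fib (r + 2) := by
    have := cont_special i j
    rw [show i + j + 3 = r + 2 by omega] at this
    exact this
  have hrange1 : 2 ^ r ≤ n := by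
    rw [pow_succ] at hn1; omega
  rcases hp with ⟨_, h1, _⟩ | ⟨_, _, h2⟩
  · refine ⟨stern n, ?_, by rw [h1]; exact hval⟩
    simp only [sternRow, Finset.mem_image, Finset.mem_Icc]
    exact ⟨n, ⟨hrange1, by omega⟩, rfl⟩
  · refine ⟨stern (n + 1), ?_, by rw [h2]; exact hval⟩
    simp only [sternRow, Finset.mem_image, Finset.mem_Icc]
    exact ⟨n + 1, ⟨by omega, by omega⟩, rfl⟩

lemma prods_ne {s i i' : ℕ} (h1 : 1 ≤ i) (hii : i < i') (h2 : 2 * i' ≤ s) :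
    fib i * fib (s - i) ≠ fib i' * fib (s - i') := by
  intro heq
  have hv := vajda (i' - i) (s - i' - i) i
  rw [show i + (i' - i) = i' by omega, show i + (s - i' - i) = s - i' by omega] at hv
  rw [show i' + (s - i' - i) = s - i by omega] at hv
  have heqz : (fib i' * fib (s - i') : ℤ) = fib i * fib (s - i) := by exact_mod_cast heq.symm
  rw [heqz] at hv
  have hz : ((-1 : ℤ)) ^ i * fib (i' - i) * fib (s - i' - i) = 0 := by linarith
  have hd : 0 < fib (i' - i) := Nat.fib_pos.mpr (by omega)
  have hb : 0 < fib (s - i' - i) := Nat.fib_pos.mpr (by omega)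
  rcases Nat.even_or_odd i with he | ho
  · rw [he.neg_one_pow] at hz
    simp at hz
    omega
  · rw [ho.neg_one_pow] at hz
    simp at hz
    omega

theorem List.eq_of_perm_of_sorted {α : Type*} {r : α → α → Prop} [Std.Antisymm r]
    {l₁ l₂ : List α} (hp : l₁.Perm l₂) (h1 : l₁.Pairwise r) (h2 : l₂.Pairwise r) : l₁ = l₂ :=
  hp.eq_of_pairwise' h1 h2

theorem stern_row_largest_values' (r : ℕ) :
    ((((sternRow r).sort (· ≤ ·)).reverse.take ((r + 1) / 2)).toFinset : Set ℕ) =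
      {m : ℕ | ∃ i j : ℕ, i + j + 1 = r ∧
        m = Nat.fib (r + 2) - Nat.fib i * Nat.fib j} := by
  rcases Nat.eq_zero_or_pos r with rfl | hr
  · rw [show (0 + 1) / 2 = 0 by norm_num, List.take_zero]
    ext v
    simp only [List.toFinset_nil, Finset.coe_empty, Set.mem_empty_iff_false,
      Set.mem_setOf_eq, false_iff]
    rintro ⟨i, j, hij, _⟩
    omega
  set T := (sternRow r).filter (fun v => fib (r + 2) ≤ v + fib (r - 2)) with hT
  set A := (sternRow r).filter (fun v => ¬ (fib (r + 2) ≤ v + fib (r - 2))) with hA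
  have hsplit : (sternRow r).sort (· ≤ ·) = A.sort (· ≤ ·) ++ T.sort (· ≤ ·) := by
    apply List.eq_of_perm_of_sorted ?_ (Finset.pairwise_sort _ _) ?_
    · apply List.perm_of_nodup_nodup_toFinset_eq (Finset.sort_nodup _ _)
      · apply List.Nodup.append (Finset.sort_nodup _ _) (Finset.sort_nodup _ _)
        intro x hx hx'
        rw [Finset.mem_sort] at hx hx'
        rw [hA, Finset.mem_filter] at hx
        rw [hT, Finset.mem_filter] at hx'
        exact hx.2 hx'.2
      · rw [List.toFinset_append, Finset.sort_toFinset, Finset.sort_toFinset,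
          Finset.sort_toFinset, Finset.union_comm]
        exact (Finset.filter_union_filter_not_eq _ _).symm
    · refine List.pairwise_append.mpr ⟨Finset.pairwise_sort _ _, Finset.pairwise_sort _ _, ?_⟩
      intro a ha b hb
      rw [Finset.mem_sort] at ha hb
      rw [hA, Finset.mem_filter] at ha
      rw [hT, Finset.mem_filter] at hb
      have h1 := ha.2
      have h2 := hb.2
      omega
  -- T as an image
  have hjge : ∀ i : ℕ, i < (r + 1) / 2 → 1 ≤ i → 1 ≤ r - 1 - i ∧ 2 * i ≤ r - 1 := by
    intro i hi h1
    omega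
  have himg : T = (Finset.range ((r + 1) / 2)).image
      (fun i => fib (r + 2) - fib i * fib (r - 1 - i)) := by
    ext v
    simp only [hT, Finset.mem_filter, Finset.mem_image, Finset.mem_range]
    constructor
    · rintro ⟨hvrow, hvbig⟩
      obtain ⟨i, j, hij, hval⟩ := row_big hr hvrow hvbig
      rcases le_total i j with hle | hle
      · refine ⟨i, by omega, ?_⟩
        rw [show r - 1 - i = j by omega]
        omega
      · refine ⟨j, by omega, ?_⟩
        rw [show r - 1 - j = i by omega, mul_comm]
        omega
    · rintro ⟨i, hi, rfl⟩
      have hij : i + (r - 1 - i) + 1 = r := by omega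
      obtain ⟨w, hwrow, hwval⟩ := row_has hij
      have hple : fib i * fib (r - 1 - i) ≤ fib (r - 2) := prod_le_fib' hij
      have : fib (r + 2) - fib i * fib (r - 1 - i) = w := by omega
      rw [this]
      exact ⟨hwrow, by omega⟩
  have hcard : T.card = (r + 1) / 2 := by
    rw [himg, Finset.card_image_of_injOn, Finset.card_range]
    intro x hx y hy hxy
    simp only [Finset.mem_coe, Finset.mem_range] at hx hy
    by_contra hne
    -- wlog x < y
    have key : ∀ x y : ℕ, x < y → y < (r + 1) / 2 →
        fib (r + 2) - fib x * fib (r - 1 - x) ≠ fib (r + 2) - fib y * fib (r - 1 - y) := by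
      intro x y hxy' hy'
      have h2y : 2 * y ≤ r - 1 := by omega
      have hpx : fib x * fib (r - 1 - x) ≤ fib (r - 2) := prod_le_fib' (by omega)
      have hpy : fib y * fib (r - 1 - y) ≤ fib (r - 2) := prod_le_fib' (by omega)
      have hfle : fib (r - 2) ≤ fib (r + 2) := Nat.fib_mono (by omega)
      intro heq
      have heq2 : fib x * fib (r - 1 - x) = fib y * fib (r - 1 - y) := by omega
      rcases Nat.eq_zero_or_pos x with rfl | hx1
      · simp at heq2
        have h1 : 0 < fib y := Nat.fib_pos.mpr (by omega)
        have h2 : 0 < fib (r - 1 - y) := Nat.fib_pos.mpr (by omega)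
        rcases heq2 with h | h <;> omega
      · exact prods_ne hx1 hxy' h2y heq2
    rcases Nat.lt_or_ge x y with h | h
    · exact key x y h hy hxy
    · exact key y x (by omega) hx hxy.symm
  -- take
  have hlen : ((T.sort (· ≤ ·)).reverse).length = (r + 1) / 2 := by
    rw [List.length_reverse, Finset.length_sort, hcard]
  have htake : (((sternRow r).sort (· ≤ ·)).reverse).take ((r + 1) / 2)
      = (T.sort (· ≤ ·)).reverse := by
    rw [hsplit, List.reverse_append, ← hlen, List.take_left]
  rw [htake, List.toFinset_reverse, Finset.sort_toFinset]
  -- final set equality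
  ext v
  simp only [Finset.coe_filter, Set.mem_setOf_eq, hT, Finset.mem_filter]
  constructor
  · rintro ⟨hvrow, hvbig⟩
    obtain ⟨i, j, hij, hval⟩ := row_big hr hvrow hvbig
    exact ⟨i, j, hij, by omega⟩
  · rintro ⟨i, j, hij, rfl⟩
    obtain ⟨w, hwrow, hwval⟩ := row_has hij
    have hple : fib i * fib j ≤ fib (r - 2) := prod_le_fib' hij
    have hfle : fib (r - 2) ≤ fib (r + 2) := Nat.fib_mono (by omega)
    have : fib (r + 2) - fib i * fib j = w := by omega
    rw [this]
    exact ⟨hwrow, by omega⟩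

/-- For every `r >= 0`, the set of the ceil(r/2) largest distinct values in
the `r`-th row of Stern's diatomic array equals `{F(r+2) - F i * F j : i, j >= 0, i + j = r - 1}`
(the latter set being empty for `r = 0`). -/
theorem stern_row_largest_values (r : ℕ) :
    ((((sternRow r).sort (· ≤ ·)).reverse.take ((r + 1) / 2)).toFinset : Set ℕ) =
      {m : ℕ | ∃ i j : ℕ, i + j + 1 = r ∧
        m = Nat.fib (r + 2) - Nat.fib i * Nat.fib j} := by
  exact stern_row_largest_values' r
end
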